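/- arXiv:0807.4145 — 5 statements merged into one kernel-verified Lean document; each statement's English description precedes it below -/
import Mathlib

section
/- For every positive integer n, the matrix U_n is invertible over ℚ and 𝓜_n = T_n · U_n⁻¹ · T_n. -/
/-!
Write `C m l` for the number of multiples of `l` in the class `{a | n / a = n / m}`. Every
multiple `l * j ≤ n` lies in exactly one class, so for any `f`,
`∑_{m ∈ S_n} f (n / m) C m l = ∑_{j ≤ n / l} f (n / (l * j))`. With `f q = [k ≤ q]` this gives
`T_n C = U_n` by counting, and with `f q = M (q / k)` it gives `𝓜_n C = T_n`, because
`∑_{j ≤ N} M (N / j) = 1` for `N ≥ 1` (this is `ζ * μ = 1`). The involution `m ↦ n / m` of `S_n`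
turns `T_n` into the upper unitriangular matrix `[k ≤ m]`, so `T_n` is invertible; hence so are
`C` and `U_n`, and `𝓜_n = T_n C⁻¹ = T_n U_n⁻¹ T_n`.
-/

open Matrix

noncomputable section

/-- `Sn n` is the set of largest representatives of the finite classes of the
equivalence relation `i ~ j ↔ n / i = n / j` on positive integers. -/
def Sn (n : ℕ) : Finset ℕ := (Finset.Icc 1 n).filter (fun k => n / (k + 1) < n / k)

/-- The Mertens function, with `mertens 0 = 0`. -/
def mertens (m : ℕ) : ℤ := ∑ j ∈ Finset.Icc 1 m, ArithmeticFunction.moebius j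

/-- The matrix `T_n` over `ℚ`, indexed by `S_n`. -/
def Tq (n : ℕ) : Matrix (Sn n) (Sn n) ℚ :=
  fun k l => if (k : ℕ) * (l : ℕ) ≤ n then 1 else 0

/-- The matrix `U_n` over `ℚ`, with entries `⌊n/(k·l)⌋`. -/
def Uq (n : ℕ) : Matrix (Sn n) (Sn n) ℚ :=
  fun k l => ((n / ((k : ℕ) * (l : ℕ)) : ℕ) : ℚ)

/-- The matrix `𝓜_n` over `ℚ`, with entries `M(⌊n/(k·l)⌋)`. -/
def Mq (n : ℕ) : Matrix (Sn n) (Sn n) ℚ :=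
  fun k l => (mertens (n / ((k : ℕ) * (l : ℕ))) : ℚ)

open Finset

namespace Nat

theorem le_div_div_self {n a : ℕ} (h : 0 < n / a) : a ≤ n / (n / a) :=
  (le_div_iff_mul_le h).2 (mul_div_le n a)

theorem div_div_div_self (n a : ℕ) : n / (n / (n / a)) = n / a := by
  rcases (n / a).eq_zero_or_pos with h | h
  · simp [h]
  have ha : 0 < a := (Nat.div_pos_iff.1 h).1
  have hq : a ≤ n / (n / a) := le_div_div_self h
  exact le_antisymm (div_le_div_left hq ha) (le_div_div_self (ha.trans_le hq))

end Nat

section Sn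

variable {n : ℕ}

theorem mem_Sn_iff {k : ℕ} : k ∈ Sn n ↔ 0 < k ∧ n / (n / k) = k := by
  simp only [Sn, mem_filter, mem_Icc]
  constructor
  · rintro ⟨⟨hk, hkn⟩, hlt⟩
    have hq : 0 < n / k := Nat.div_pos hkn hk
    refine ⟨hk, le_antisymm ?_ (Nat.le_div_div_self hq)⟩
    by_contra! hgt
    have : n / k ≤ n / (k + 1) :=
      (Nat.le_div_iff_mul_le k.succ_pos).2 (mul_comm (n / k) _ ▸ (Nat.le_div_iff_mul_le hq).1 hgt)
    omega
  · rintro ⟨hk, hfix⟩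
    have hq : 0 < n / k := Nat.pos_of_ne_zero fun h => by simp [h] at hfix; omega
    refine ⟨⟨hk, (Nat.div_pos_iff.1 hq).2⟩, ?_⟩
    by_contra! hle
    have : k + 1 ≤ n / (n / k) :=
      (Nat.le_div_iff_mul_le hq).2 (mul_comm (k + 1) _ ▸ (Nat.le_div_iff_mul_le k.succ_pos).1 hle)
    omega

theorem div_mem_Sn {a : ℕ} (ha : 0 < a) (han : a ≤ n) : n / a ∈ Sn n :=
  mem_Sn_iff.2 ⟨Nat.div_pos han ha, Nat.div_div_div_self n a⟩

theorem pos_of_mem_Sn {k : ℕ} (hk : k ∈ Sn n) : 0 < k := (mem_Sn_iff.1 hk).1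

theorem le_of_mem_Sn {k : ℕ} (hk : k ∈ Sn n) : k ≤ n := (mem_Icc.1 (mem_filter.1 hk).1).2

theorem div_div_of_mem_Sn {k : ℕ} (hk : k ∈ Sn n) : n / (n / k) = k := (mem_Sn_iff.1 hk).2

end Sn

open ArithmeticFunction in
theorem sum_Icc_mertens_div (N : ℕ) :
    ∑ j ∈ Icc 1 N, mertens (N / j) = if 0 < N then 1 else 0 := by
  have Icc_one : ∀ K, Icc 1 K = Ioc 0 K := fun K => by ext; simp only [mem_Icc, mem_Ioc]; omega
  calc ∑ j ∈ Icc 1 N, mertens (N / j)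
      = ∑ j ∈ Ioc 0 N, (zeta : ArithmeticFunction ℤ) j * ∑ i ∈ Ioc 0 (N / j), moebius i := by
        rw [Icc_one]
        refine sum_congr rfl fun j hj => ?_
        simp [mertens, Icc_one, (mem_Ioc.1 hj).1.ne']
    _ = ∑ j ∈ Ioc 0 N, ((zeta : ArithmeticFunction ℤ) * moebius) j :=
        (sum_Ioc_mul_eq_sum_sum _ _ N).symm
    _ = if 0 < N then 1 else 0 := by
        simp [coe_zeta_mul_moebius, ArithmeticFunction.one_apply, Nat.one_le_iff_ne_zero,
          Nat.pos_iff_ne_zero, ite_not]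

theorem sum_Icc_mertens_div_of_le {K N : ℕ} (h : K ≤ N) :
    ∑ j ∈ Icc 1 N, mertens (K / j) = if 0 < K then 1 else 0 := by
  rw [← sum_Icc_mertens_div K]
  refine (sum_subset (Icc_subset_Icc_right h) fun j hj hjK => ?_).symm
  rw [Nat.div_eq_of_lt (by simp only [mem_Icc] at hj hjK; omega)]
  simp [mertens]

theorem card_Icc_filter_le_div (N : ℕ) {k : ℕ} (hk : 0 < k) :
    #{j ∈ Icc 1 N | k ≤ N / j} = N / k := by
  have : {j ∈ Icc 1 N | k ≤ N / j} = Icc 1 (N / k) := by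
    ext j
    simp only [mem_filter, mem_Icc]
    constructor
    · rintro ⟨⟨hj, -⟩, hkj⟩
      exact ⟨hj, (Nat.le_div_iff_mul_le hk).2 (mul_comm k j ▸ Nat.mul_le_of_le_div j k N hkj)⟩
    · rintro ⟨hj, hjk⟩
      refine ⟨⟨hj, hjk.trans (Nat.div_le_self N k)⟩, (Nat.le_div_iff_mul_le hj).2 ?_⟩
      exact mul_comm j k ▸ Nat.mul_le_of_le_div k j N hjk
  simp [this]

section Matrices

variable {n : ℕ}

theorem sum_Sn_mul_card_class {R : Type*} [Semiring R] (f : ℕ → R) (l : ℕ) :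
    ∑ m ∈ Sn n, f (n / m) * #{j ∈ Icc 1 (n / l) | n / (l * j) = n / m}
      = ∑ j ∈ Icc 1 (n / l), f (n / (l * j)) := by
  have maps_to : ∀ j ∈ Icc 1 (n / l), n / (n / (l * j)) ∈ Sn n := by
    intro j hj
    obtain ⟨hj, hjl⟩ := mem_Icc.1 hj
    have hl : 0 < l := Nat.pos_of_ne_zero fun h => by simp [h] at hjl; omega
    have hlj : l * j ≤ n := mul_comm j l ▸ Nat.mul_le_of_le_div l j n hjl
    exact div_mem_Sn (Nat.div_pos hlj (Nat.mul_pos hl hj)) (Nat.div_le_self n _)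
  rw [← sum_fiberwise_of_maps_to maps_to]
  refine sum_congr rfl fun m hm => ?_
  have fiber : {j ∈ Icc 1 (n / l) | n / (n / (l * j)) = m}
      = {j ∈ Icc 1 (n / l) | n / (l * j) = n / m} :=
    filter_congr fun j _ => ⟨fun h => by rw [← h, Nat.div_div_div_self],
      fun h => by rw [h, div_div_of_mem_Sn hm]⟩
  rw [fiber, sum_congr rfl fun j hj => by rw [(mem_filter.1 hj).2], sum_const, nsmul_eq_mul']

/-- `Cq n m l` counts the multiples of `l` lying in the class of `m`. -/
def Cq (n : ℕ) : Matrix (Sn n) (Sn n) ℚ :=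
  fun m l => #{j ∈ Icc 1 (n / l) | n / (l * j) = n / m}

theorem Tq_mul_Cq : Tq n * Cq n = Uq n := by
  ext k l
  have hk := pos_of_mem_Sn k.2
  calc (Tq n * Cq n) k l
      = ∑ m ∈ Sn n, (if (k : ℕ) ≤ n / m then 1 else 0 : ℚ)
          * #{j ∈ Icc 1 (n / l) | n / (l * j) = n / m} := by
        rw [mul_apply, ← sum_coe_sort (Sn n)]
        refine sum_congr rfl fun m _ => ?_
        simp only [Tq, Cq, Nat.le_div_iff_mul_le (pos_of_mem_Sn m.2)]
    _ = ∑ j ∈ Icc 1 (n / l), if (k : ℕ) ≤ n / l / j then 1 else 0 := by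
        rw [sum_Sn_mul_card_class (fun q => if (k : ℕ) ≤ q then 1 else 0)]
        simp only [Nat.div_div_eq_div_mul]
    _ = Uq n k l := by
        rw [sum_boole, card_Icc_filter_le_div _ hk, Nat.div_div_eq_div_mul, mul_comm]
        rfl

theorem Mq_mul_Cq : Mq n * Cq n = Tq n := by
  ext k l
  calc (Mq n * Cq n) k l
      = ∑ m ∈ Sn n, (mertens (n / m / k) : ℚ)
          * #{j ∈ Icc 1 (n / l) | n / (l * j) = n / m} := by
        rw [mul_apply, ← sum_coe_sort (Sn n)]
        refine sum_congr rfl fun m _ => ?_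
        simp only [Mq, Cq, Nat.div_div_eq_div_mul, mul_comm]
    _ = ((∑ j ∈ Icc 1 (n / l), mertens (n / l / k / j) : ℤ) : ℚ) := by
        rw [sum_Sn_mul_card_class (fun q => (mertens (q / k) : ℚ)), Int.cast_sum]
        simp only [Nat.div_div_eq_div_mul, mul_right_comm]
    _ = Tq n k l := by
        rw [sum_Icc_mertens_div_of_le (Nat.div_le_self _ _), Nat.div_div_eq_div_mul]
        simp [Tq, Nat.div_pos_iff, pos_of_mem_Sn k.2, pos_of_mem_Sn l.2, mul_comm]

end Matrices

section Duality

variable {n : ℕ}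

def divPerm (n : ℕ) : Equiv.Perm (Sn n) :=
  Function.Involutive.toPerm (fun m => ⟨n / m, div_mem_Sn (pos_of_mem_Sn m.2) (le_of_mem_Sn m.2)⟩)
    fun m => Subtype.ext (div_div_of_mem_Sn m.2)

theorem coe_divPerm_apply (m : Sn n) : (divPerm n m : ℕ) = n / m := rfl

theorem Tq_submatrix_divPerm (k m : Sn n) :
    (Tq n).submatrix id (divPerm n) k m = if k ≤ m then 1 else 0 := by
  have hq : 0 < n / m := Nat.div_pos (le_of_mem_Sn m.2) (pos_of_mem_Sn m.2)
  have hle : (k : ℕ) * (n / m) ≤ n ↔ k ≤ m := by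
    rw [← Nat.le_div_iff_mul_le hq, div_div_of_mem_Sn m.2, Subtype.coe_le_coe]
  simp only [submatrix_apply, id_eq, Tq, coe_divPerm_apply, hle]

theorem isUnit_det_Tq : IsUnit (Tq n).det := by
  have htri : ((Tq n).submatrix id (divPerm n)).IsUpperTriangular := fun k m (hmk : m < k) => by
    rw [Tq_submatrix_divPerm, if_neg (not_le.2 hmk)]
  have hdet : ((Tq n).submatrix id (divPerm n)).det = 1 := by
    simp only [det_of_isUpperTriangular htri, Tq_submatrix_divPerm, le_refl, if_true,
      prod_const_one]
  rw [det_permute'] at hdet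
  exact IsUnit.of_mul_eq_one_right _ hdet

end Duality

namespace Matrix

variable {ι R : Type*} [Fintype ι] [DecidableEq ι] [CommRing R]

theorem isUnit_and_eq_mul_inv_mul_of_mul_eq {M T U C : Matrix ι ι R} (hT : IsUnit T.det)
    (hMC : M * C = T) (hTC : T * C = U) : IsUnit U ∧ M = T * U⁻¹ * T := by
  have hC : IsUnit C.det := isUnit_of_mul_isUnit_right (by rwa [← det_mul, hMC])
  have hU : IsUnit U.det := by rw [← hTC, det_mul]; exact hT.mul hC
  refine ⟨(isUnit_iff_isUnit_det U).2 hU, ?_⟩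
  calc M = T * C⁻¹ := by rw [← hMC, mul_nonsing_inv_cancel_right _ _ hC]
    _ = T * U⁻¹ * T := by rw [← hTC, mul_inv_rev, ← mul_assoc, nonsing_inv_mul_cancel_right _ _ hT]

end Matrix

theorem stmt0_general (n : ℕ) :
    IsUnit (Uq n) ∧ Mq n = Tq n * (Uq n)⁻¹ * Tq n :=
  isUnit_and_eq_mul_inv_mul_of_mul_eq isUnit_det_Tq Mq_mul_Cq Tq_mul_Cq

theorem stmt0 (n : ℕ) (hn : 0 < n) :
    IsUnit (Uq n) ∧ Mq n = Tq n * (Uq n)⁻¹ * Tq n :=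
  stmt0_general n
end
end

section
/- For every positive integer n and every k ∈ S_n, one has ⌊n/k⌋ ∈ S_n and ⌊n/⌊n/k⌋⌋ = k; that is, the map k ↦ ⌊n/k⌋ is an involution of S_n. -/
open Matrix

noncomputable section

theorem stmt7 (n : ℕ) (hn : 0 < n) (k : ℕ) (hk : k ∈ Sn n) :
    n / k ∈ Sn n ∧ n / (n / k) = k := by
  simp only [Sn, Finset.mem_filter, Finset.mem_Icc] at hk ⊢
  obtain ⟨⟨hk1, hkn⟩, hlt⟩ := hk
  have hk0 : 0 < k := hk1
  have hq0 : 0 < n / k := Nat.div_pos hkn hk0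
  -- k ≤ n / (n / k)
  have h1 : k ≤ n / (n / k) := by
    rw [Nat.le_div_iff_mul_le hq0, mul_comm]
    exact Nat.div_mul_le_self n k
  -- n / (n / k) ≤ k
  have h2 : n / (n / k) ≤ k := by
    by_contra h
    push_neg at h
    have hk1' : k + 1 ≤ n / (n / k) := h
    rw [Nat.le_div_iff_mul_le hq0] at hk1'
    have : n / k ≤ n / (k + 1) := by
      rw [Nat.le_div_iff_mul_le (Nat.succ_pos k), mul_comm]
      exact hk1'
    omega
  have heq : n / (n / k) = k := le_antisymm h2 h1
  refine ⟨⟨⟨hq0, Nat.div_le_self n k⟩, ?_⟩, heq⟩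
  rw [heq]
  rw [Nat.div_lt_iff_lt_mul (Nat.succ_pos _)]
  rw [Nat.mul_succ]
  have := Nat.div_add_mod n k
  have := Nat.mod_lt n hk0
  omega
end
end

section
/- For every positive integer n and every k ∈ S_n with k < n, the successor k⁺ of k in S_n satisfies k⁺ ≤ (4 + 2√2)·k. -/
open Matrix

noncomputable section

/-- The successor of `k` in `S_n`: the least element of `S_n` strictly greater than `k`. -/
def succS (n k : ℕ) : ℕ := sInf {m : ℕ | m ∈ Sn n ∧ k < m}

theorem stmt9 (n : ℕ) (hn : 0 < n) (k : ℕ) (hk : k ∈ Sn n) (hkn : k < n) :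
    (succS n k : ℝ) ≤ (4 + 2 * Real.sqrt 2) * k := by
  simp only [Sn, Finset.mem_filter, Finset.mem_Icc] at hk
  obtain ⟨⟨hk1, hkn'⟩, hq⟩ := hk
  set t : ℕ := n / (k + 1) with ht
  have ht0 : 0 < t := Nat.div_pos (by omega) (by omega)
  set M : ℕ := n / t with hM
  have hM0 : 0 < M := Nat.div_pos (Nat.div_le_self n (k+1)) ht0
  have hMt : M * t ≤ n := Nat.div_mul_le_self n t
  have hnlt : n < t * M + t := by
    rw [hM]
    have h1 := Nat.div_add_mod n t
    have h2 := Nat.mod_lt n ht0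
    omega
  have hnk : n < (k + 1) * t + (k + 1) := by
    rw [ht]
    have h1 := Nat.div_add_mod n (k + 1)
    have h2 := Nat.mod_lt n (show 0 < k + 1 by omega)
    omega
  have hMmem : M ∈ Sn n := by
    simp only [Sn, Finset.mem_filter, Finset.mem_Icc]
    refine ⟨⟨hM0, Nat.div_le_self n t⟩, ?_⟩
    have h1 : t ≤ n / M := (Nat.le_div_iff_mul_le hM0).mpr (by rw [mul_comm]; exact hMt)
    have h2 : n / (M + 1) < t := by
      rw [Nat.div_lt_iff_lt_mul (Nat.succ_pos M)]
      show n < t * (M + 1)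
      have e : t * (M + 1) = t * M + t := by ring
      omega
    omega
  have hkM : k < M := by
    have h := Nat.div_mul_le_self n (k + 1)
    have : k + 1 ≤ M := by
      rw [hM]
      exact (Nat.le_div_iff_mul_le ht0).mpr (by rw [mul_comm]; exact h)
    omega
  have hsM : succS n k ≤ M := Nat.sInf_le ⟨hMmem, hkM⟩
  have hc6 : (6 : ℝ) ≤ 4 + 2 * Real.sqrt 2 := by
    have h : (1:ℝ) ≤ Real.sqrt 2 := by
      rw [show (1:ℝ) = Real.sqrt 1 by simp]
      exact Real.sqrt_le_sqrt (by norm_num)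
    linarith
  have hK1 : (1 : ℝ) ≤ (k : ℝ) := by exact_mod_cast hk1
  have hT1 : (1 : ℝ) ≤ (t : ℝ) := by exact_mod_cast ht0
  have hMT : (M : ℝ) * t ≤ n := by exact_mod_cast hMt
  have hNk : (n : ℝ) < ((k : ℝ) + 1) * t + ((k : ℝ) + 1) := by exact_mod_cast hnk
  -- M * t ≤ n < (k+1)(t+1) ≤ 2t(k+1), so M < 2(k+1) ≤ 4k
  have hM4 : (M : ℝ) < 2 * ((k : ℝ) + 1) := by
    have h2 : (M : ℝ) * t < 2 * ((k : ℝ) + 1) * t := by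
      nlinarith [mul_nonneg (sub_nonneg.mpr hT1) (show (0:ℝ) ≤ (k:ℝ) + 1 by linarith)]
    have hT0 : (0 : ℝ) < t := by linarith
    exact lt_of_mul_lt_mul_right (by linarith [h2]) (le_of_lt hT0)
  have hfin : (M : ℝ) ≤ (4 + 2 * Real.sqrt 2) * k :=
    calc (M : ℝ) ≤ 4 * k := by linarith
      _ ≤ 6 * k := by linarith
      _ ≤ (4 + 2 * Real.sqrt 2) * k := by nlinarith
  calc (succS n k : ℝ) ≤ (M : ℝ) := by exact_mod_cast hsM
    _ ≤ _ := hfin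
end
end

section
/- For every positive integer n: if n < ⌊√n⌋² + ⌊√n⌋ then the cardinality of S_n equals 2⌊√n⌋ − 1, and if n ≥ ⌊√n⌋² + ⌊√n⌋ then the cardinality of S_n equals 2⌊√n⌋. -/
open Matrix

noncomputable section

private lemma sqrt_le_div (n : ℕ) {v : ℕ} (hv1 : 1 ≤ v) (hvs : v ≤ Nat.sqrt n) :
    Nat.sqrt n ≤ n / v := by
  have h1 : Nat.sqrt n ≤ n / Nat.sqrt n :=
    (Nat.le_div_iff_mul_le (by omega)).mpr (Nat.sqrt_le n)
  exact le_trans h1 (Nat.div_le_div_left hvs hv1)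

private lemma div_div_eq (n : ℕ) {v : ℕ} (hv1 : 1 ≤ v) (hvs : v ≤ Nat.sqrt n) :
    n / (n / v) = v := by
  have hq : Nat.sqrt n ≤ n / v := sqrt_le_div n hv1 hvs
  have hqpos : 0 < n / v := by omega
  have h1 : v ≤ n / (n / v) :=
    (Nat.le_div_iff_mul_le hqpos).mpr (by rw [mul_comm]; exact Nat.div_mul_le_self n v)
  by_contra h
  have h2 : v + 1 ≤ n / (n / v) := by omega
  have e1 : (v + 1) * (n / v) ≤ n := (Nat.le_div_iff_mul_le hqpos).mp h2
  have e2 : n < (n / v + 1) * v :=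
    (Nat.div_lt_iff_lt_mul (by omega)).mp (Nat.lt_succ_self _)
  have e1' : v * (n / v) + (n / v) ≤ n := by nlinarith
  have e2' : n < v * (n / v) + v := by nlinarith
  have : n / v < v := by omega
  omega

theorem stmt10 (n : ℕ) (hn : 0 < n) :
    (n < Nat.sqrt n ^ 2 + Nat.sqrt n → (Sn n).card = 2 * Nat.sqrt n - 1) ∧
    (Nat.sqrt n ^ 2 + Nat.sqrt n ≤ n → (Sn n).card = 2 * Nat.sqrt n) := by
  set s := Nat.sqrt n with hs
  have hs1 : 1 ≤ s := Nat.sqrt_pos.mpr hn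
  have hsn : s ≤ n := Nat.sqrt_le_self n
  have hssn : s * s ≤ n := Nat.sqrt_le n
  have hlt : n < (s + 1) * (s + 1) := Nat.lt_succ_sqrt n
  have hset : Sn n = Finset.Icc 1 s ∪ (Finset.Icc 1 s).image (fun v => n / v) := by
    ext k
    simp only [Sn, Finset.mem_filter, Finset.mem_union, Finset.mem_image, Finset.mem_Icc]
    constructor
    · rintro ⟨⟨hk1, hkn⟩, hjump⟩
      by_cases hks : k ≤ s
      · exact Or.inl ⟨hk1, hks⟩
      · right
        push_neg at hks
        have hv1 : 1 ≤ n / k := (Nat.one_le_div_iff (by omega)).mpr hkn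
        have hvs : n / k ≤ s := by
          have ha : n / k ≤ n / (s + 1) := Nat.div_le_div_left hks (by omega)
          have hb : n / (s + 1) < s + 1 := (Nat.div_lt_iff_lt_mul (by omega)).mpr hlt
          omega
        refine ⟨n / k, ⟨hv1, hvs⟩, ?_⟩
        have hk_le : k ≤ n / (n / k) :=
          (Nat.le_div_iff_mul_le hv1).mpr (by rw [mul_comm]; exact Nat.div_mul_le_self n k)
        have hk_ge : n / (n / k) ≤ k := by
          by_contra h
          push_neg at h
          have h2 : n / (n / (n / k)) ≤ n / (k + 1) := Nat.div_le_div_left h (by omega)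
          rw [div_div_eq n hv1 hvs] at h2
          omega
        omega
    · rintro (⟨hk1, hks⟩ | ⟨v, ⟨hv1, hvs⟩, rfl⟩)
      · refine ⟨⟨hk1, le_trans hks hsn⟩, ?_⟩
        by_contra h
        push_neg at h
        have heq : n / k = n / (k + 1) :=
          le_antisymm h (Nat.div_le_div_left (by omega) (by omega))
        have hq : s ≤ n / k := sqrt_le_div n hk1 hks
        have e1 : (k + 1) * (n / (k + 1)) ≤ n := by
          rw [mul_comm]; exact Nat.div_mul_le_self n (k + 1)
        have e2 : n < (n / k + 1) * k :=
          (Nat.div_lt_iff_lt_mul (by omega)).mp (Nat.lt_succ_self _)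
        rw [← heq] at e1
        have e1' : k * (n / k) + (n / k) ≤ n := by nlinarith
        have e2' : n < k * (n / k) + k := by nlinarith
        omega
      · have hnv : s ≤ n / v := sqrt_le_div n hv1 hvs
        refine ⟨⟨by omega, Nat.div_le_self n v⟩, ?_⟩
        rw [div_div_eq n hv1 hvs]
        by_contra h
        push_neg at h
        have h1 : v * (n / v + 1) ≤ n := (Nat.le_div_iff_mul_le (by omega)).mp h
        have h2 : n < (n / v + 1) * v :=
          (Nat.div_lt_iff_lt_mul (by omega)).mp (Nat.lt_succ_self _)
        nlinarith
  have hinj : Set.InjOn (fun v => n / v) (Finset.Icc 1 s) := by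
    intro a ha b hb hab
    simp only [Finset.coe_Icc, Set.mem_Icc] at ha hb
    have h1 := div_div_eq n ha.1 ha.2
    have h2 := div_div_eq n hb.1 hb.2
    simp only at hab
    rw [hab] at h1
    omega
  have hcardim : ((Finset.Icc 1 s).image (fun v => n / v)).card = s := by
    rw [Finset.card_image_of_injOn hinj, Nat.card_Icc]; omega
  have hunion := Finset.card_union_add_card_inter (Finset.Icc 1 s)
    ((Finset.Icc 1 s).image (fun v => n / v))
  rw [hset]
  constructor
  · intro hcase
    have hns : n / s = s := by
      have h1 : s ≤ n / s := sqrt_le_div n hs1 le_rfl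
      have h2 : n / s < s + 1 := (Nat.div_lt_iff_lt_mul (by omega)).mpr (by nlinarith)
      omega
    have hint : Finset.Icc 1 s ∩ (Finset.Icc 1 s).image (fun v => n / v) = {s} := by
      ext x
      simp only [Finset.mem_inter, Finset.mem_image, Finset.mem_Icc, Finset.mem_singleton]
      constructor
      · rintro ⟨⟨hx1, hxs⟩, v, ⟨hv1, hvs⟩, rfl⟩
        have := sqrt_le_div n hv1 hvs
        omega
      · rintro rfl
        exact ⟨⟨hs1, le_rfl⟩, s, ⟨hs1, le_rfl⟩, hns⟩
    rw [hint] at hunion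
    simp only [Finset.card_singleton, Nat.card_Icc, hcardim] at hunion
    omega
  · intro hcase
    have hint : Finset.Icc 1 s ∩ (Finset.Icc 1 s).image (fun v => n / v) = ∅ := by
      ext x
      simp only [Finset.mem_inter, Finset.mem_image, Finset.mem_Icc, Finset.notMem_empty,
        iff_false, not_and]
      rintro ⟨hx1, hxs⟩ ⟨v, ⟨hv1, hvs⟩, rfl⟩
      have h1 : n / v ≥ n / s := Nat.div_le_div_left hvs hv1
      have h2 : s + 1 ≤ n / s := (Nat.le_div_iff_mul_le (by omega)).mpr (by nlinarith)
      omega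
    rw [hint] at hunion
    simp only [Finset.card_empty, Nat.card_Icc, hcardim] at hunion
    omega
end
end

section
/- For every positive integer n, the cardinality of S_n equals ⌊√n⌋ + ⌊(√(4n+1) − 1)/2⌋ (equivalently, in integer-arithmetic terms, Nat.sqrt n + (Nat.sqrt (4n+1) − 1)/2). -/
open Matrix

noncomputable section

/-- If `k² ≤ n` then `k` is the largest element of its class. -/
lemma sq_le_div_lt (n k : ℕ) (hk : 0 < k) (h : k * k ≤ n) :
    n / (k + 1) < n / k := by
  by_contra hc
  push_neg at hc
  have hle : n / (k + 1) ≤ n / k := Nat.div_le_div_left (Nat.le_succ k) hk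
  have heq : n / (k + 1) = n / k := le_antisymm hle hc
  set q := n / (k + 1) with hq
  have e1 : q * (k + 1) ≤ n := Nat.div_mul_le_self n (k + 1)
  have e2 : n < (q + 1) * k := by
    have h2 : n / k < q + 1 := by omega
    exact (Nat.div_lt_iff_lt_mul hk).mp h2
  have hqk : q < k := by nlinarith
  have : (q + 1) * k ≤ k * k := by nlinarith
  omega

theorem stmt11 (n : ℕ) (hn : 0 < n) :
    (Sn n).card = Nat.sqrt n + (Nat.sqrt (4 * n + 1) - 1) / 2 := by
  set s := Nat.sqrt n with hs
  have hs1 : 1 ≤ s := Nat.sqrt_pos.mpr hn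
  have hsn : s * s ≤ n := Nat.sqrt_le n
  have hns : n < (s + 1) * (s + 1) := Nat.lt_succ_sqrt n
  set m := n / (s + 1) with hm
  have hms : m ≤ s := by
    have : n / (s + 1) < s + 1 := (Nat.div_lt_iff_lt_mul (by omega)).mpr hns
    omega
  have hm2 : s - 1 ≤ m := by
    rcases Nat.lt_or_ge s 2 with h1 | h1
    · calc s - 1 ≤ 0 := by omega
      _ ≤ m := Nat.zero_le m
    · rw [hm]
      refine (Nat.le_div_iff_mul_le (by omega)).mpr ?_
      obtain ⟨t, ht⟩ : ∃ t, s = t + 2 := ⟨s - 2, by omega⟩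
      rw [ht] at hsn ⊢
      have h5 : t + 2 - 1 = t + 1 := rfl
      rw [h5]
      nlinarith
  -- key decomposition
  have key : Sn n = Finset.Icc 1 s ∪ (Finset.Icc 1 m).image (fun q => n / q) := by
    ext k
    simp only [Sn, Finset.mem_filter, Finset.mem_Icc, Finset.mem_union, Finset.mem_image]
    constructor
    · rintro ⟨⟨h1, h2⟩, h3⟩
      by_cases hks : k ≤ s
      · exact Or.inl ⟨h1, hks⟩
      · push_neg at hks
        refine Or.inr ⟨n / k, ⟨?_, ?_⟩, ?_⟩
        · exact Nat.one_le_div_iff (by omega) |>.mpr h2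
        · -- n / k ≤ m = n / (s+1) since s + 1 ≤ k
          exact Nat.div_le_div_left hks (by omega)
        · -- n / (n / k) = k since k is largest in its class
          have hq1 : k ≤ n / (n / k) := by
            refine (Nat.le_div_iff_mul_le ?_).mpr (by rw [mul_comm]; exact Nat.div_mul_le_self n k)
            exact Nat.one_le_div_iff (by omega) |>.mpr h2
          have hq2 : n / (n / k) ≤ k := by
            by_contra hc
            push_neg at hc
            have hpos : 0 < n / k := Nat.one_le_div_iff (by omega) |>.mpr h2
            have h4 : (k + 1) * (n / k) ≤ n := (Nat.le_div_iff_mul_le hpos).mp hc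
            have h5 : n / k ≤ n / (k + 1) := (Nat.le_div_iff_mul_le (by omega)).mpr
              (by rw [mul_comm] at h4; exact h4)
            omega
          omega
    · rintro (⟨h1, h2⟩ | ⟨q, ⟨hq1, hq2⟩, rfl⟩)
      · exact ⟨⟨h1, le_trans h2 (le_trans (Nat.le_mul_of_pos_left s hs1) hsn)⟩,
          sq_le_div_lt n k h1 (le_trans (Nat.mul_le_mul h2 h2) hsn)⟩
      · -- k = n / q with 1 ≤ q ≤ m
        have hqs : q ≤ s := le_trans hq2 hms
        have hqn : (s + 1) * q ≤ n := by
          have h4 := (Nat.le_div_iff_mul_le (by omega : 0 < s + 1)).mp hq2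
          rw [mul_comm]; exact h4
        have hk1 : s + 1 ≤ n / q := (Nat.le_div_iff_mul_le (by omega)).mpr (by linarith)
        have hkn : n / q ≤ n := Nat.div_le_self n q
        refine ⟨⟨by omega, hkn⟩, ?_⟩
        -- n / (n/q + 1) < q ≤ n / (n/q)
        have hub : q ≤ n / (n / q) := (Nat.le_div_iff_mul_le (by omega)).mpr
          (by rw [mul_comm]; exact Nat.div_mul_le_self n q)
        have hlb : n / (n / q + 1) < q := by
          refine (Nat.div_lt_iff_lt_mul (by omega)).mpr ?_
          have : n / q < n / q + 1 := Nat.lt_succ_self _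
          have := (Nat.div_lt_iff_lt_mul (by omega : 0 < q)).mp this
          linarith
        omega
  rw [key]
  have hdisj : Disjoint (Finset.Icc 1 s) ((Finset.Icc 1 m).image (fun q => n / q)) := by
    rw [Finset.disjoint_right]
    rintro k hk
    simp only [Finset.mem_image, Finset.mem_Icc] at hk ⊢
    obtain ⟨q, ⟨hq1, hq2⟩, rfl⟩ := hk
    have hqn : (s + 1) * q ≤ n := by
      have h4 := (Nat.le_div_iff_mul_le (by omega : 0 < s + 1)).mp hq2
      rw [mul_comm]; exact h4
    have : s + 1 ≤ n / q := (Nat.le_div_iff_mul_le (by omega)).mpr (by linarith)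
    omega
  rw [Finset.card_union_of_disjoint hdisj]
  have hinj : Set.InjOn (fun q => n / q) (Finset.Icc 1 m) := by
    rintro a ha b hb hab
    simp only [Finset.coe_Icc, Set.mem_Icc] at ha hb
    by_contra hne
    rcases Nat.lt_or_ge a b with h | h
    · have : n / b ≤ n / (a + 1) := Nat.div_le_div_left (by omega) (by omega)
      have := sq_le_div_lt n a ha.1 (by nlinarith [le_trans ha.2 hms])
      simp only at hab
      omega
    · have hba : b < a := by omega
      have : n / a ≤ n / (b + 1) := Nat.div_le_div_left (by omega) (by omega)
      have := sq_le_div_lt n b hb.1 (by nlinarith [le_trans hb.2 hms])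
      simp only at hab
      omega
  rw [Finset.card_image_of_injOn hinj, Nat.card_Icc, Nat.card_Icc]
  -- now: s + 1 - 1 + (m + 1 - 1) = s + (sqrt (4n+1) - 1)/2
  have harith : (Nat.sqrt (4 * n + 1) - 1) / 2 = m := by
    have hmm : m * (m + 1) ≤ n := by
      calc m * (m + 1) ≤ m * (s + 1) := Nat.mul_le_mul_left m (by omega)
      _ ≤ n := by
        have := Nat.div_mul_le_self n (s + 1)
        rw [hm]; linarith [this]
    have hmub : n < (m + 1) * (m + 2) := by
      have h1 : n < (m + 1) * (s + 1) := by
        have : n / (s + 1) < m + 1 := by omega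
        have := (Nat.div_lt_iff_lt_mul (by omega : 0 < s + 1)).mp this
        linarith
      have h2 : s + 1 ≤ m + 2 := by omega
      calc n < (m + 1) * (s + 1) := h1
      _ ≤ (m + 1) * (m + 2) := Nat.mul_le_mul_left _ h2
    have hlb : 2 * m + 1 ≤ Nat.sqrt (4 * n + 1) := by
      refine Nat.le_sqrt.mpr ?_
      nlinarith
    have hub : Nat.sqrt (4 * n + 1) < 2 * m + 3 := by
      refine Nat.sqrt_lt.mpr ?_
      nlinarith
    omega
  omega
end
end
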